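/- There exists a satisfiable TeamLTL(~) formula all of whose models are uncountable: for AP = {1, 2, #}, there is a TeamLTL(~) formula φ and an uncountable team satisfying φ, such that every team L with L ⊨ φ is uncountable. -/

import Mathlib

/-!
A model of the formula consists of clocks (`two` everywhere, `hash` at most once) and data
traces (neither `two` nor `hash`), and has a clock ticking at every position. Boolean negation
lets the formula speak about every split of the team: once the clocks ticking outside a set
`A ⊆ ℕ` are set aside, the rest must contain a data trace whose `one`-positions are exactly the
ticks of the remaining clocks, namely `A`. So a model has a trace for every subset of `ℕ` and is
uncountable by Cantor's theorem, while the team of all clocks and all data traces is a model.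
-/

/-- A trace over the set `AP` of atomic propositions. -/
abbrev Trace (AP : Type) := ℕ → Set AP

/-- A team: a set of traces. -/
abbrev Team (AP : Type) := Set (Trace AP)

/-- The suffix `w≥i` of a trace. -/
def Trace.shift {AP : Type} (w : Trace AP) (i : ℕ) : Trace AP := fun j => w (i + j)

/-- The suffix team `L≥i`. -/
def Team.shift {AP : Type} (L : Team AP) (i : ℕ) : Team AP := (fun w => Trace.shift w i) '' L


/-- TeamLTL(~) formulas over `AP`: TeamLTL extended with Boolean negation `~`. -/
inductive TeamFormN (AP : Type) : Type where
  | atom (p : AP)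
  | natom (p : AP)
  | or (φ ψ : TeamFormN AP)
  | and (φ ψ : TeamFormN AP)
  | bneg (φ : TeamFormN AP)
  | next (φ : TeamFormN AP)
  | untl (φ ψ : TeamFormN AP)
  | rel (φ ψ : TeamFormN AP)

/-- Team satisfaction for TeamLTL(~), with split disjunction. -/
def TeamFormN.sat {AP : Type} : TeamFormN AP → Team AP → Prop
  | .atom p, L => ∀ w ∈ L, p ∈ w 0
  | .natom p, L => ∀ w ∈ L, p ∉ w 0
  | .or φ ψ, L => ∃ L1 L2, L = L1 ∪ L2 ∧ φ.sat L1 ∧ ψ.sat L2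
  | .and φ ψ, L => φ.sat L ∧ ψ.sat L
  | .bneg φ, L => ¬ φ.sat L
  | .next φ, L => φ.sat (L.shift 1)
  | .untl φ ψ, L => ∃ i, ψ.sat (L.shift i) ∧ ∀ k < i, φ.sat (L.shift k)
  | .rel φ ψ, L => ∀ i, ψ.sat (L.shift i) ∨ ∃ k < i, φ.sat (L.shift k)

/-- The set `AP = {1, 2, #}` of atomic propositions. -/
inductive AP3 : Type where
  | one
  | two
  | hash
deriving DecidableEq

instance : Fintype AP3 where
  elems := {AP3.one, AP3.two, AP3.hash}
  complete := by intro x; cases x <;> simp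

namespace Trace

variable {AP : Type}

@[simp] lemma shift_apply (w : Trace AP) (i j : ℕ) : w.shift i j = w (i + j) := rfl

end Trace

namespace Team

variable {AP : Type} {L : Team AP} {i : ℕ} {P : Trace AP → Prop}

lemma forall_mem_shift : (∀ u ∈ L.shift i, P u) ↔ ∀ w ∈ L, P (w.shift i) :=
  Set.forall_mem_image

lemma exists_mem_shift : (∃ u ∈ L.shift i, P u) ↔ ∃ w ∈ L, P (w.shift i) :=
  Set.exists_mem_image

lemma not_countable_of_forall_exists_setOf_mem (p : AP)
    (h : ∀ A : Set ℕ, ∃ w ∈ L, {n | p ∈ w n} = A) : ¬ L.Countable := by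
  intro hL
  have hsurj : (fun w : Trace AP => {n | p ∈ w n}) '' L = Set.univ :=
    Set.eq_univ_of_forall fun A => h A
  have : Countable (Set ℕ) := Set.countable_univ_iff.mp (hsurj ▸ hL.image _)
  obtain ⟨f, hf⟩ := exists_injective_nat (Set ℕ)
  exact Function.cantor_injective f hf

end Team

namespace TeamFormN

variable {AP : Type}

lemma sat_and {φ ψ : TeamFormN AP} {L : Team AP} : (and φ ψ).sat L ↔ φ.sat L ∧ ψ.sat L :=
  Iff.rfl

lemma sat_or {φ ψ : TeamFormN AP} {L : Team AP} :
    (or φ ψ).sat L ↔ ∃ L₁ L₂, L = L₁ ∪ L₂ ∧ φ.sat L₁ ∧ ψ.sat L₂ :=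
  Iff.rfl

lemma sat_bneg {φ : TeamFormN AP} {L : Team AP} : (bneg φ).sat L ↔ ¬ φ.sat L :=
  Iff.rfl

def Flat (φ : TeamFormN AP) (P : Trace AP → Prop) : Prop :=
  ∀ L, φ.sat L ↔ ∀ w ∈ L, P w

lemma flat_atom (p : AP) : Flat (atom p) (fun w => p ∈ w 0) := fun _ => Iff.rfl

lemma flat_natom (p : AP) : Flat (natom p) (fun w => p ∉ w 0) := fun _ => Iff.rfl

namespace Flat

variable {φ ψ : TeamFormN AP} {P Q : Trace AP → Prop}

lemma congr (hφ : Flat φ P) (hPQ : ∀ w, P w ↔ Q w) : Flat φ Q := fun L =>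
  (hφ L).trans <| forall₂_congr fun w _ => hPQ w

lemma and (hφ : Flat φ P) (hψ : Flat ψ Q) : Flat (φ.and ψ) (fun w => P w ∧ Q w) := fun L =>
  (and_congr (hφ L) (hψ L)).trans forall₂_and.symm

lemma or (hφ : Flat φ P) (hψ : Flat ψ Q) : Flat (φ.or ψ) (fun w => P w ∨ Q w) := by
  intro L
  simp only [sat_or, hφ _, hψ _]
  constructor
  · rintro ⟨L₁, L₂, rfl, h₁, h₂⟩ w (hw | hw)
    exacts [.inl (h₁ w hw), .inr (h₂ w hw)]
  · intro h
    refine ⟨{w ∈ L | P w}, {w ∈ L | ¬ P w}, ?_, fun w hw => hw.2,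
      fun w hw => (h w hw.1).resolve_left hw.2⟩
    ext w
    by_cases hPw : P w <;> simp [hPw]

lemma next (hφ : Flat φ P) : Flat φ.next (fun w => P (w.shift 1)) := fun _ =>
  (hφ _).trans Team.forall_mem_shift

end Flat

def imp (φ ψ : TeamFormN AP) : TeamFormN AP := bneg (and φ (bneg ψ))

lemma sat_imp {φ ψ : TeamFormN AP} {L : Team AP} : (imp φ ψ).sat L ↔ (φ.sat L → ψ.sat L) := by
  simp only [imp, sat_bneg, sat_and, not_and, not_not]

variable [Inhabited AP]

def top : TeamFormN AP := or (atom default) (natom default)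

def bot : TeamFormN AP := bneg top

/-- The empty team is the only one satisfying `p ∧ ¬p`. -/
def nonempty : TeamFormN AP := bneg (and (atom default) (natom default))

def globally (φ : TeamFormN AP) : TeamFormN AP := rel bot φ

def someTrace (φ : TeamFormN AP) : TeamFormN AP := or (and φ nonempty) top

variable {φ ψ : TeamFormN AP} {P : Trace AP → Prop} {L : Team AP}

lemma sat_top (L : Team AP) : top.sat L :=
  ((flat_atom _).or (flat_natom _) L).2 fun _ _ => em _

lemma sat_nonempty : nonempty.sat L ↔ L.Nonempty := by
  simp only [nonempty, sat_bneg, sat_and, not_and, Set.nonempty_def]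
  constructor
  · intro h
    by_contra! hL
    exact h (fun w hw => (hL w hw).elim) (fun w hw => (hL w hw).elim)
  · rintro ⟨w, hw⟩ h₁ h₂
    exact h₂ w hw (h₁ w hw)

lemma sat_globally : (globally φ).sat L ↔ ∀ i, φ.sat (L.shift i) := by
  simp only [globally, bot, sat, sat_top, not_true_eq_false, and_false, exists_false, or_false]

lemma sat_someTrace : (someTrace φ).sat L ↔ ∃ T ⊆ L, T.Nonempty ∧ φ.sat T := by
  simp only [someTrace, sat_or, sat_and, sat_top, and_true, sat_nonempty]
  constructor
  · rintro ⟨T, L', rfl, hT, hne⟩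
    exact ⟨T, Set.subset_union_left, hne, hT⟩
  · rintro ⟨T, hTL, hne, hT⟩
    exact ⟨T, L, (Set.union_eq_self_of_subset_left hTL).symm, hT, hne⟩

namespace Flat

lemma globally (hφ : Flat φ P) : Flat (globally φ) (fun w => ∀ i, P (w.shift i)) := by
  intro L
  simp only [sat_globally, hφ _, Team.forall_mem_shift]
  exact ⟨fun h w hw i => h i w hw, fun h i w hw => h w hw i⟩

lemma sat_someTrace (hφ : Flat φ P) : (someTrace φ).sat L ↔ ∃ w ∈ L, P w := by
  rw [TeamFormN.sat_someTrace]
  constructor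
  · rintro ⟨T, hTL, ⟨w, hw⟩, hT⟩
    exact ⟨w, hTL hw, (hφ T).1 hT w hw⟩
  · rintro ⟨w, hw, hPw⟩
    refine ⟨{w}, Set.singleton_subset_iff.2 hw, Set.singleton_nonempty w, (hφ _).2 ?_⟩
    simpa using hPw

lemma sat_someTrace_shift (hφ : Flat φ P) {i : ℕ} :
    (someTrace φ).sat (L.shift i) ↔ ∃ w ∈ L, P (w.shift i) :=
  hφ.sat_someTrace.trans Team.exists_mem_shift

end Flat

end TeamFormN

namespace AP3

open TeamFormN

instance : Inhabited AP3 := ⟨one⟩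

def IsClock (w : Trace AP3) : Prop :=
  (∀ i, two ∈ w i ∧ one ∉ w i) ∧ ∀ i j, hash ∈ w i → hash ∈ w j → i = j

def IsData (w : Trace AP3) : Prop := ∀ i, two ∉ w i ∧ hash ∉ w i

def HasTick (M : Team AP3) (i : ℕ) : Prop := ∃ w ∈ M, two ∈ w i ∧ hash ∈ w i

def HasOne (M : Team AP3) (i : ℕ) : Prop := ∃ w ∈ M, two ∉ w i ∧ one ∈ w i

def Matching (M : Team AP3) : Prop :=
  ∀ i, (HasOne M i → ∀ w ∈ M, two ∈ w i ∨ one ∈ w i) ∧ (HasTick M i ↔ HasOne M i)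

def hashIsLast : TeamFormN AP3 := or (natom hash) (next (globally (natom hash)))

def clocksAndData : TeamFormN AP3 :=
  or (globally (and (atom two) (and (natom one) hashIsLast)))
    (globally (and (natom two) (natom hash)))

def ticksEverywhere : TeamFormN AP3 := globally (someTrace (and (atom two) (atom hash)))

def matching : TeamFormN AP3 :=
  globally <| and (imp (someTrace (and (natom two) (atom one))) (or (atom two) (atom one))) <|
    and (imp (someTrace (and (atom two) (atom hash))) (someTrace (and (natom two) (atom one))))
      (imp (someTrace (and (natom two) (atom one))) (someTrace (and (atom two) (atom hash))))

def encodesClocks : TeamFormN AP3 :=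
  or (and (someTrace (natom two)) matching) (globally (natom two))

def encodesAllSubsets : TeamFormN AP3 := bneg (or (globally (atom two)) (bneg encodesClocks))

def uncountableFormula : TeamFormN AP3 :=
  and clocksAndData (and ticksEverywhere encodesAllSubsets)

lemma hashIsLast_iff {w : Trace AP3} :
    (∀ i, hash ∉ w i ∨ ∀ j, hash ∉ w (i + (1 + j))) ↔
      ∀ i j, hash ∈ w i → hash ∈ w j → i = j := by
  constructor
  · intro h i j hi hj
    by_contra hij
    wlog hlt : i < j generalizing i j
    · exact this j i hj hi (Ne.symm hij) (by omega)
    refine (h i).resolve_left (not_not.2 hi) (j - i - 1) ?_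
    rwa [show i + (1 + (j - i - 1)) = j by omega]
  · intro h i
    by_contra! hi
    obtain ⟨hi, j, hj⟩ := hi
    have := h _ _ hi hj
    omega

lemma flat_clocksAndData : Flat clocksAndData (fun w => IsClock w ∨ IsData w) := by
  refine ((((flat_atom _).and ((flat_natom _).and ((flat_natom _).or
    (flat_natom _).globally.next))).globally).or
    ((flat_natom _).and (flat_natom _)).globally).congr fun w => ?_
  simp only [Trace.shift_apply, add_zero, IsClock, IsData, ← hashIsLast_iff, forall_and, and_assoc]

lemma sat_ticksEverywhere {L : Team AP3} : ticksEverywhere.sat L ↔ ∀ n, HasTick L n := by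
  simp only [ticksEverywhere, sat_globally, ((flat_atom _).and (flat_atom _)).sat_someTrace_shift,
    Trace.shift_apply, add_zero, HasTick]

lemma sat_matching {M : Team AP3} : matching.sat M ↔ Matching M := by
  simp only [matching, sat_globally, sat_and, sat_imp,
    ((flat_natom two).and (flat_atom one)).sat_someTrace_shift,
    ((flat_atom two).and (flat_atom hash)).sat_someTrace_shift, (flat_atom two).or (flat_atom one) _,
    Matching, HasOne, HasTick, Team.forall_mem_shift, Trace.shift_apply, add_zero, iff_def]

lemma sat_encodesClocks {R : Team AP3} :
    encodesClocks.sat R ↔ ∃ M S, R = M ∪ S ∧ (∃ w ∈ M, two ∉ w 0) ∧ Matching M ∧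
      ∀ w ∈ S, ∀ i, two ∉ w i := by
  simp only [encodesClocks, sat_or, sat_and, (flat_natom two).sat_someTrace, sat_matching,
    (flat_natom two).globally _, Trace.shift_apply, add_zero, and_assoc]

lemma sat_encodesAllSubsets {L : Team AP3} :
    encodesAllSubsets.sat L ↔
      ∀ T R, L = T ∪ R → (∀ w ∈ T, ∀ i, two ∈ w i) → encodesClocks.sat R := by
  simp only [encodesAllSubsets, sat_bneg, sat_or, (flat_atom two).globally _, Trace.shift_apply,
    add_zero, not_exists, not_and, not_not]

lemma IsClock.of_two_mem {w : Trace AP3} {i : ℕ} (hw : IsClock w ∨ IsData w) (h2 : two ∈ w i) :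
    IsClock w :=
  hw.resolve_right fun hd => (hd i).1 h2

lemma IsData.of_two_not_mem {w : Trace AP3} {i : ℕ} (hw : IsClock w ∨ IsData w)
    (h2 : two ∉ w i) : IsData w :=
  hw.resolve_left fun hc => h2 (hc.1 i).1

lemma Matching.one_mem_iff {M : Team AP3} (hM : Matching M) {w : Trace AP3} (hw : w ∈ M)
    {n : ℕ} (hw2 : two ∉ w n) : one ∈ w n ↔ HasTick M n := by
  rw [(hM n).2]
  exact ⟨fun h1 => ⟨w, hw, hw2, h1⟩, fun hOne => ((hM n).1 hOne w hw).resolve_left hw2⟩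

lemma exists_setOf_one_mem_eq {L : Team AP3} (h : uncountableFormula.sat L) (A : Set ℕ) :
    ∃ w ∈ L, {n | one ∈ w n} = A := by
  obtain ⟨hcd, hticks, henc⟩ := h
  rw [flat_clocksAndData] at hcd
  rw [sat_ticksEverywhere] at hticks
  rw [sat_encodesAllSubsets] at henc
  set T : Team AP3 := {w ∈ L | (∀ i, two ∈ w i) ∧ ∃ m ∉ A, hash ∈ w m}
  obtain ⟨M, S, hRMS, ⟨w, hwM, hw2⟩, hM, hS⟩ := sat_encodesClocks.1 <|
    henc T (L \ T) (Set.union_sdiff_cancel (Set.sep_subset _ _)).symm fun w hw => hw.2.1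
  have hML : M ⊆ L \ T := hRMS ▸ Set.subset_union_left
  have hwData : IsData w := .of_two_not_mem (hcd w (hML hwM).1) hw2
  refine ⟨w, (hML hwM).1, Set.ext fun n => (hM.one_mem_iff hwM (hwData n).1).trans ⟨?_, ?_⟩⟩
  · rintro ⟨c, hcM, hc2, hch⟩
    have hc : IsClock c := .of_two_mem (hcd c (hML hcM).1) hc2
    by_contra hn
    exact (hML hcM).2 ⟨(hML hcM).1, fun i => (hc.1 i).1, n, hn, hch⟩
  · intro hn
    obtain ⟨c, hcL, hc2, hch⟩ := hticks n
    have hc : IsClock c := .of_two_mem (hcd c hcL) hc2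
    have hcT : c ∉ T := fun ⟨_, _, m, hm, hcm⟩ => hm (hc.2 m n hcm hch ▸ hn)
    have hcS : c ∉ S := fun hcS => hS c hcS n hc2
    exact ⟨c, ((hRMS ▸ ⟨hcL, hcT⟩ : c ∈ M ∪ S)).resolve_right hcS, hc2, hch⟩

lemma not_countable_of_sat_uncountableFormula {L : Team AP3} (h : uncountableFormula.sat L) :
    ¬ L.Countable :=
  Team.not_countable_of_forall_exists_setOf_mem one (exists_setOf_one_mem_eq h)

def clock (n : ℕ) : Trace AP3 := fun i => {p | p = two ∨ p = hash ∧ i = n}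

def dataTrace (A : Set ℕ) : Trace AP3 := fun i => {p | p = one ∧ i ∈ A}

def standardModel : Team AP3 := Set.range clock ∪ Set.range dataTrace

@[simp] lemma mem_clock {p : AP3} {n i : ℕ} : p ∈ clock n i ↔ p = two ∨ p = hash ∧ i = n :=
  Iff.rfl

@[simp] lemma mem_dataTrace {p : AP3} {A : Set ℕ} {i : ℕ} :
    p ∈ dataTrace A i ↔ p = one ∧ i ∈ A :=
  Iff.rfl

lemma isClock_clock (n : ℕ) : IsClock (clock n) := by
  simp only [IsClock, mem_clock]
  grind

lemma isData_dataTrace (A : Set ℕ) : IsData (dataTrace A) := by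
  simp [IsData]

lemma matching_clock_image_union_dataTrace (C : Set ℕ) :
    Matching (clock '' C ∪ {dataTrace C}) := by
  intro i
  have hOne : HasOne (clock '' C ∪ {dataTrace C}) i ↔ i ∈ C := by simp [HasOne]
  have hTick : HasTick (clock '' C ∪ {dataTrace C}) i ↔ i ∈ C := by simp [HasTick]
  refine ⟨fun h => ?_, hTick.trans hOne.symm⟩
  rintro w (⟨n, -, rfl⟩ | rfl)
  · simp
  · simp [hOne.1 h]

lemma sat_encodesClocks_of_union_eq_standardModel {T R : Team AP3} (hTR : standardModel = T ∪ R)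
    (hT : ∀ w ∈ T, ∀ i, two ∈ w i) : encodesClocks.sat R := by
  set C := {n | clock n ∈ R}
  have hdataR (A : Set ℕ) : dataTrace A ∈ R :=
    (hTR.subset (.inr ⟨A, rfl⟩)).resolve_left fun h => by simpa using hT _ h 0
  refine sat_encodesClocks.2 ⟨clock '' C ∪ {dataTrace C}, R ∩ Set.range dataTrace, ?_,
    ⟨dataTrace C, .inr rfl, by simp⟩, matching_clock_image_union_dataTrace C, ?_⟩
  · ext w
    constructor
    · intro hw
      rcases hTR.superset (.inr hw) with ⟨n, rfl⟩ | ⟨A, rfl⟩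
      exacts [.inl (.inl ⟨n, hw, rfl⟩), .inr ⟨hw, A, rfl⟩]
    · rintro ((⟨n, hn, rfl⟩ | rfl) | ⟨hw, -⟩)
      exacts [hn, hdataR C, hw]
  · rintro w ⟨-, A, rfl⟩ i
    simp

lemma sat_standardModel : uncountableFormula.sat standardModel := by
  refine ⟨(flat_clocksAndData _).2 ?_, sat_ticksEverywhere.2 fun n => ?_,
    sat_encodesAllSubsets.2 fun _ _ => sat_encodesClocks_of_union_eq_standardModel⟩
  · rintro w (⟨n, rfl⟩ | ⟨A, rfl⟩)
    exacts [.inl (isClock_clock n), .inr (isData_dataTrace A)]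
  · exact ⟨clock n, .inl ⟨n, rfl⟩, by simp⟩

end AP3

/-- there is a satisfiable TeamLTL(~) formula over `AP = {1,2,#}`
all of whose models are uncountable. -/
theorem teamLTLN_uncountable_models :
    ∃ φ : TeamFormN AP3,
      (∃ L : Team AP3, ¬ L.Countable ∧ φ.sat L) ∧
      (∀ L : Team AP3, φ.sat L → ¬ L.Countable) :=
  ⟨AP3.uncountableFormula,
    ⟨AP3.standardModel, AP3.not_countable_of_sat_uncountableFormula AP3.sat_standardModel,
      AP3.sat_standardModel⟩,
    fun _ => AP3.not_countable_of_sat_uncountableFormula⟩
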